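/- arXiv:2202.14008 — 2 statements merged into one kernel-verified Lean document; each statement's English description precedes it below -/
import Mathlib

section
/- Let (A_k) be a decreasing sequence of nonempty bounded subsets of ℝ^m and S a nonempty bounded subset of ℝ^m. If ⋂_{k≥1} closure(A_k) ⊆ S, then ⋂_{k≥1} closedConvexHull(A_k) ⊆ closedConvexHull(S). -/
theorem stmt_1 (m : ℕ) (A : ℕ → Set (EuclideanSpace ℝ (Fin m)))
    (S : Set (EuclideanSpace ℝ (Fin m)))
    (hdec : ∀ k, A (k + 1) ⊆ A k)
    (hne : ∀ k, (A k).Nonempty) (hbd : ∀ k, Bornology.IsBounded (A k))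
    (hSne : S.Nonempty) (hSbd : Bornology.IsBounded S)
    (h : (⋂ k, closure (A k)) ⊆ S) :
    (⋂ k, closure (convexHull ℝ (A k))) ⊆ closure (convexHull ℝ S) := by
  intro x hx
  by_contra hxS
  obtain ⟨f, u, hfS, hfx⟩ := geometric_hahn_banach_closed_point
    (convex_convexHull ℝ S).closure isClosed_closure hxS
  -- D k : decreasing sequence of nonempty compact sets
  set D : ℕ → Set (EuclideanSpace ℝ (Fin m)) :=
    fun k => closure (A k) ∩ {y | u ≤ f y} with hD
  have hDclosed : ∀ k, IsClosed (D k) := fun k =>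
    isClosed_closure.inter (isClosed_le continuous_const f.continuous)
  have hDdec : ∀ k, D (k + 1) ⊆ D k := fun k =>
    Set.inter_subset_inter_left _ (closure_mono (hdec k))
  have hDne : ∀ k, (D k).Nonempty := by
    intro k
    by_contra hcon
    rw [Set.not_nonempty_iff_eq_empty] at hcon
    have hsub : A k ⊆ {y | f y ≤ u} := by
      intro y hy
      simp only [Set.mem_setOf_eq]
      by_contra hy'
      have : y ∈ D k := ⟨subset_closure hy, le_of_lt (lt_of_not_ge hy')⟩
      simp [hcon] at this
    have hconv : convexHull ℝ (A k) ⊆ {y | f y ≤ u} :=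
      convexHull_min hsub (convex_halfSpace_le (f : EuclideanSpace ℝ (Fin m) →ₗ[ℝ] ℝ).isLinear u)
    have hcl : closure (convexHull ℝ (A k)) ⊆ {y | f y ≤ u} :=
      closure_minimal hconv (isClosed_le f.continuous continuous_const)
    have := hcl (Set.mem_iInter.mp hx k)
    exact absurd this (not_le.mpr hfx)
  have hD0 : IsCompact (D 0) :=
    Metric.isCompact_of_isClosed_isBounded (hDclosed 0)
      ((hbd 0).closure.subset Set.inter_subset_left)
  obtain ⟨y, hy⟩ := IsCompact.nonempty_iInter_of_sequence_nonempty_isCompact_isClosed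
    D hDdec hDne hD0 hDclosed
  have hyA : y ∈ ⋂ k, closure (A k) :=
    Set.mem_iInter.mpr fun k => (Set.mem_iInter.mp hy k).1
  have hyS : y ∈ closure (convexHull ℝ S) :=
    subset_closure (subset_convexHull ℝ S (h hyA))
  exact absurd (Set.mem_iInter.mp hy 0).2 (not_le.mpr (hfS y hyS))
end

section
/- Let f : U × ℝ × ℝ^m → [0,∞) be continuous with p ↦ f(x,s,p) quasiconvex for each (x,s). Let v : U → ℝ^m and u : U → ℝ with u continuous, let V ⊆ U be open, K ≥ 0, and suppose f(x, u(x), v(x)) ≤ K for all x ∈ V \ N, where N is a null set. Then for every x ∈ V and every w ∈ closedConvexHull{ lim_k v(y_k) : y_k → x, y_k ∈ V \ N, limit exists }, one has f(x, u(x), w) ≤ K, provided v is bounded near each point of V. -/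
open Filter Topology MeasureTheory

theorem stmt_7 (n m : ℕ) (U : Set (EuclideanSpace ℝ (Fin n))) (hU : IsOpen U)
    (f : EuclideanSpace ℝ (Fin n) → ℝ → EuclideanSpace ℝ (Fin m) → ℝ)
    (hfcont : Continuous (fun q : EuclideanSpace ℝ (Fin n) × ℝ × EuclideanSpace ℝ (Fin m) =>
      f q.1 q.2.1 q.2.2))
    (hfnonneg : ∀ x s p, 0 ≤ f x s p)
    (hfquasi : ∀ x s c, Convex ℝ {p : EuclideanSpace ℝ (Fin m) | f x s p ≤ c})
    (u : EuclideanSpace ℝ (Fin n) → ℝ) (hu : ContinuousOn u U)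
    (v : EuclideanSpace ℝ (Fin n) → EuclideanSpace ℝ (Fin m))
    (V : Set (EuclideanSpace ℝ (Fin n))) (hV : IsOpen V) (hVU : V ⊆ U)
    (K : ℝ) (hK : 0 ≤ K)
    (N : Set (EuclideanSpace ℝ (Fin n))) (hNnull : volume N = 0)
    (hbound : ∀ x ∈ V \ N, f x (u x) (v x) ≤ K)
    (hvloc : ∀ x ∈ V, ∃ r > 0, Bornology.IsBounded (v '' (Metric.ball x r))) :
    ∀ x ∈ V, ∀ w ∈ closure (convexHull ℝ
      {z | ∃ y : ℕ → EuclideanSpace ℝ (Fin n),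
        (∀ k, y k ∈ V \ N) ∧ Tendsto y atTop (𝓝 x) ∧
        Tendsto (fun k => v (y k)) atTop (𝓝 z)}),
      f x (u x) w ≤ K := by
  intro x hx w hw
  set C : Set (EuclideanSpace ℝ (Fin m)) := {p | f x (u x) p ≤ K} with hC
  have hCconv : Convex ℝ C := hfquasi x (u x) K
  have hCclosed : IsClosed C := by
    have : Continuous fun p : EuclideanSpace ℝ (Fin m) => f x (u x) p :=
      hfcont.comp ((continuous_const (y := x)).prodMk
        ((continuous_const (y := u x)).prodMk continuous_id))
    exact isClosed_le this continuous_const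
  have hux : ContinuousAt u x := hu.continuousAt (hU.mem_nhds (hVU hx))
  have hsub : {z | ∃ y : ℕ → EuclideanSpace ℝ (Fin n),
      (∀ k, y k ∈ V \ N) ∧ Tendsto y atTop (𝓝 x) ∧
      Tendsto (fun k => v (y k)) atTop (𝓝 z)} ⊆ C := by
    rintro z ⟨y, hyVN, hyx, hvz⟩
    have htuple : Tendsto (fun k => ((y k, u (y k), v (y k)) :
        EuclideanSpace ℝ (Fin n) × ℝ × EuclideanSpace ℝ (Fin m)))
        atTop (𝓝 (x, u x, z)) := by
      refine Tendsto.prodMk_nhds hyx (Tendsto.prodMk_nhds ?_ hvz)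
      exact (hux.tendsto).comp hyx
    have hf : Tendsto (fun k => f (y k) (u (y k)) (v (y k))) atTop
        (𝓝 (f x (u x) z)) := (hfcont.tendsto _).comp htuple
    exact le_of_tendsto hf (Eventually.of_forall fun k => hbound _ (hyVN k))
  have : closure (convexHull ℝ {z | ∃ y : ℕ → EuclideanSpace ℝ (Fin n),
      (∀ k, y k ∈ V \ N) ∧ Tendsto y atTop (𝓝 x) ∧
      Tendsto (fun k => v (y k)) atTop (𝓝 z)}) ⊆ C := by
    refine (closure_minimal (convexHull_min hsub hCconv) hCclosed).trans ?_
    exact le_of_eq rfl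
  exact this hw
end
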